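/- arXiv:2410.14115 — 5 statements merged into one kernel-verified Lean document; each statement's English description precedes it below -/
import Mathlib

section
/- If Q is an unbiased contractive compressor, i.e., E[‖Q(A) − A‖²] ≤ (1 − δ)‖A‖² and E[Q(A)] = A for all A, with δ ∈ (0,1], then the rescaled compressor Q′(A) = Q(A)/(2−δ) satisfies E[‖Q′(A) − A‖²] ≤ (1 − 1/(2−δ))‖A‖² for all A. -/
open MeasureTheory

/-! Writing `c • Q A - A = c • (Q A - A) + (c - 1) • A`, the first summand has mean zero by
unbiasedness, so the cross term integrates away and
`E‖c • Q A - A‖² = c² E‖Q A - A‖² + (1 - c)² ‖A‖² ≤ (c² (1 - δ) + (1 - c)²) ‖A‖²`.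
For `c = (2 - δ)⁻¹` the bracket equals `1 - c`. -/

section MeanSquare

variable {Ω E : Type*} [MeasurableSpace Ω] {μ : Measure Ω} [IsProbabilityMeasure μ]
  [NormedAddCommGroup E] [InnerProductSpace ℝ E] [CompleteSpace E]

theorem integral_norm_add_sq_of_integral_eq_zero {Y : Ω → E} (hY : Integrable Y μ)
    (hY2 : Integrable (fun ω => ‖Y ω‖ ^ 2) μ) (hY0 : ∫ ω, Y ω ∂μ = 0) (v : E) :
    ∫ ω, ‖Y ω + v‖ ^ 2 ∂μ = ∫ ω, ‖Y ω‖ ^ 2 ∂μ + ‖v‖ ^ 2 := by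
  have hcross : ∫ ω, inner ℝ v (Y ω) ∂μ = 0 := by
    rw [integral_inner hY, hY0, inner_zero_right]
  have hcross_int : Integrable (fun ω => 2 * inner ℝ v (Y ω)) μ :=
    (hY.const_inner v).const_mul 2
  simp_rw [norm_add_sq_real, real_inner_comm v]
  rw [integral_add (hY2.fun_add hcross_int) (integrable_const _), integral_add hY2 hcross_int,
    integral_const_mul, hcross, integral_const, probReal_univ, one_smul, mul_zero, add_zero]

theorem integral_norm_smul_sub_sq_of_integral_eq {X : Ω → E} {m : E} (hX : Integrable X μ)
    (hX2 : Integrable (fun ω => ‖X ω - m‖ ^ 2) μ) (hXm : ∫ ω, X ω ∂μ = m) (c : ℝ) :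
    ∫ ω, ‖c • X ω - m‖ ^ 2 ∂μ = c ^ 2 * ∫ ω, ‖X ω - m‖ ^ 2 ∂μ + (1 - c) ^ 2 * ‖m‖ ^ 2 := by
  have hnorm_smul_sq : ∀ (a : ℝ) (x : E), ‖a • x‖ ^ 2 = a ^ 2 * ‖x‖ ^ 2 := fun a x => by
    rw [norm_smul, mul_pow, Real.norm_eq_abs, sq_abs]
  have hsplit : ∀ ω, c • X ω - m = c • (X ω - m) + (c - 1) • m := fun ω => by
    rw [smul_sub, sub_smul, one_smul]; abel
  have hcentered : Integrable (fun ω => c • (X ω - m)) μ :=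
    (hX.sub (integrable_const m)).fun_smul c
  have hmean_zero : ∫ ω, c • (X ω - m) ∂μ = 0 := by
    rw [integral_smul, integral_sub hX (integrable_const m), hXm, integral_const,
      probReal_univ, one_smul, sub_self, smul_zero]
  have hcentered_sq : Integrable (fun ω => ‖c • (X ω - m)‖ ^ 2) μ := by
    simpa only [hnorm_smul_sq] using hX2.const_mul (c ^ 2)
  simp_rw [hsplit]
  rw [integral_norm_add_sq_of_integral_eq_zero hcentered hcentered_sq hmean_zero]
  simp_rw [hnorm_smul_sq]
  rw [integral_const_mul]
  ring

end MeanSquare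

theorem unbiased_to_biased_contractive_compressor_general
    {E : Type*} [NormedAddCommGroup E] [InnerProductSpace ℝ E] [CompleteSpace E]
    {Ω : Type*} [MeasurableSpace Ω] (P : Measure Ω) [IsProbabilityMeasure P]
    (Q : E → Ω → E) (δ : ℝ) (hδ1 : δ ≤ 1)
    (hint : ∀ A : E, Integrable (fun ω => Q A ω) P)
    (hint2 : ∀ A : E, Integrable (fun ω => ‖Q A ω - A‖ ^ 2) P)
    (hcontract : ∀ A : E, (∫ ω, ‖Q A ω - A‖ ^ 2 ∂P) ≤ (1 - δ) * ‖A‖ ^ 2)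
    (hunbiased : ∀ A : E, (∫ ω, Q A ω ∂P) = A) :
    ∀ A : E, (∫ ω, ‖(2 - δ)⁻¹ • Q A ω - A‖ ^ 2 ∂P) ≤ (1 - (2 - δ)⁻¹) * ‖A‖ ^ 2 := by
  intro A
  have h2δ : 2 - δ ≠ 0 := by linarith
  rw [integral_norm_smul_sub_sq_of_integral_eq (hint A) (hint2 A) (hunbiased A)]
  calc (2 - δ)⁻¹ ^ 2 * ∫ ω, ‖Q A ω - A‖ ^ 2 ∂P + (1 - (2 - δ)⁻¹) ^ 2 * ‖A‖ ^ 2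
      ≤ (2 - δ)⁻¹ ^ 2 * ((1 - δ) * ‖A‖ ^ 2) + (1 - (2 - δ)⁻¹) ^ 2 * ‖A‖ ^ 2 := by
        gcongr; exact hcontract A
    _ = (1 - (2 - δ)⁻¹) * ‖A‖ ^ 2 := by field_simp; ring

/-- If `Q` is an unbiased contractive compressor, i.e.
`E[‖Q(A) − A‖²] ≤ (1 − δ)‖A‖²` and `E[Q(A)] = A` for all `A`, with `δ ∈ (0,1]`,
then the rescaled compressor `Q′(A) = Q(A)/(2−δ)` satisfies
`E[‖Q′(A) − A‖²] ≤ (1 − 1/(2−δ))‖A‖²` for all `A`. -/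
theorem unbiased_to_biased_contractive_compressor
    {E : Type*} [NormedAddCommGroup E] [InnerProductSpace ℝ E] [CompleteSpace E]
    {Ω : Type*} [MeasurableSpace Ω] (P : Measure Ω) [IsProbabilityMeasure P]
    (Q : E → Ω → E) (δ : ℝ) (hδ0 : 0 < δ) (hδ1 : δ ≤ 1)
    (hint : ∀ A : E, Integrable (fun ω => Q A ω) P)
    (hint2 : ∀ A : E, Integrable (fun ω => ‖Q A ω - A‖ ^ 2) P)
    (hcontract : ∀ A : E, (∫ ω, ‖Q A ω - A‖ ^ 2 ∂P) ≤ (1 - δ) * ‖A‖ ^ 2)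
    (hunbiased : ∀ A : E, (∫ ω, Q A ω ∂P) = A) :
    ∀ A : E, (∫ ω, ‖(2 - δ)⁻¹ • Q A ω - A‖ ^ 2 ∂P) ≤ (1 - (2 - δ)⁻¹) * ‖A‖ ^ 2 :=
  unbiased_to_biased_contractive_compressor_general P Q δ hδ1 hint hint2 hcontract hunbiased
end

section
/- Let each g_i : ℝ^{d_x} × ℝ^{d_y} → ℝ be μ-strongly convex in y with L-Lipschitz gradients jointly in (x,y). Let ỹ* = argmin_y (1/m)Σ_i g_i(x_i, y) and y*(x̄) = argmin_y (1/m)Σ_i g_i(x̄, y), where x̄ = (1/m)Σ_i x_i. Then ‖ỹ* − y*(x̄)‖² ≤ (L²/μ²)·(1/m)·Σ_{i=1}^m ‖x_i − x̄‖². -/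
open Finset Set Filter

section Aux

variable {E : Type*} [NormedAddCommGroup E] [InnerProductSpace ℝ E]

/-- Quadratic growth at a minimizer of a strongly convex function. -/
lemma strong_growth_aux {μ : ℝ} {f : E → ℝ} (hf : StrongConvexOn Set.univ μ f)
    {z : E} (hz : IsMinOn f Set.univ z) (y : E) :
    μ / 2 * ‖y - z‖ ^ 2 ≤ f y - f z := by
  set c := μ / 2 * ‖y - z‖ ^ 2 with hc
  have key : ∀ t ∈ Set.Ioc (0:ℝ) 1, (1 - t) * c ≤ f y - f z := by
    intro t ht
    have h := hf.2 (Set.mem_univ y) (Set.mem_univ z) ht.1.le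
      (by linarith [ht.2] : (0:ℝ) ≤ 1 - t) (by ring)
    have hmin := isMinOn_iff.mp hz (t • y + (1 - t) • z) (Set.mem_univ _)
    have h2 : f z ≤ t * f y + (1 - t) * f z - t * (1 - t) * c := by
      have := hmin.trans h
      simpa [smul_eq_mul, hc] using this
    nlinarith [ht.1]
  have h0 : Filter.Tendsto (fun t : ℝ => (1 - t) * c)
      (nhdsWithin 0 (Set.Ioc (0:ℝ) 1)) (nhds c) := by
    have h1 : Filter.Tendsto (fun t : ℝ => (1 - t) * c) (nhds 0) (nhds ((1 - 0) * c)) :=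
      ((tendsto_const_nhds.sub tendsto_id).mul tendsto_const_nhds)
    simpa using h1.mono_left nhdsWithin_le_nhds
  have hne : (nhdsWithin (0:ℝ) (Set.Ioc 0 1)).NeBot := by
    refine mem_closure_iff_nhdsWithin_neBot.mp ?_
    rw [closure_Ioc (one_ne_zero.symm)]
    exact ⟨le_refl 0, zero_le_one⟩
  exact le_of_tendsto h0 (eventually_mem_nhdsWithin.mono key)

/-- The average of `μ`-strongly convex functions is `μ`-strongly convex. -/
lemma avg_strong_aux {μ : ℝ} {m : ℕ} (hm : 0 < m) (f : Fin m → E → ℝ)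
    (hf : ∀ i, StrongConvexOn Set.univ μ (f i)) :
    StrongConvexOn Set.univ μ (fun y => (m : ℝ)⁻¹ * ∑ i, f i y) := by
  refine ⟨convex_univ, ?_⟩
  intro p _ q _ a b ha hb hab
  have hmpos : (0:ℝ) < m := Nat.cast_pos.mpr hm
  have h1 : ∑ i, f i (a • p + b • q)
      ≤ ∑ i, (a * f i p + b * f i q - a * b * (μ / 2 * ‖p - q‖ ^ 2)) := by
    refine Finset.sum_le_sum fun i _ => ?_
    simpa [smul_eq_mul] using (hf i).2 (Set.mem_univ p) (Set.mem_univ q) ha hb hab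
  have h2 : (m:ℝ)⁻¹ * ∑ i, f i (a • p + b • q)
      ≤ (m:ℝ)⁻¹ * ∑ i, (a * f i p + b * f i q - a * b * (μ / 2 * ‖p - q‖ ^ 2)) :=
    mul_le_mul_of_nonneg_left h1 (by positivity)
  simp only [smul_eq_mul]
  refine h2.trans_eq ?_
  rw [Finset.sum_sub_distrib, Finset.sum_add_distrib, ← Finset.mul_sum, ← Finset.mul_sum,
    Finset.sum_const, Finset.card_univ, Fintype.card_fin, nsmul_eq_mul]
  field_simp

end Aux

set_option maxHeartbeats 1000000

/-- Let each `g_i : ℝ^{d_x} × ℝ^{d_y} → ℝ` be `μ`-strongly convex in `y`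
with `L`-Lipschitz gradients. Let `ỹ* = argmin_y (1/m)Σ_i g_i(x_i, y)` and
`y*(x̄) = argmin_y (1/m)Σ_i g_i(x̄, y)`, where `x̄ = (1/m)Σ_i x_i`. Then
`‖ỹ* − y*(x̄)‖² ≤ (L²/μ²)·(1/m)·Σ_i ‖x_i − x̄‖²`. -/
theorem consensus_optimum_deviation
    {dx dy m : ℕ} (hm : 0 < m)
    (g : Fin m → EuclideanSpace ℝ (Fin dx) → EuclideanSpace ℝ (Fin dy) → ℝ)
    (μ L : ℝ) (hμ : 0 < μ) (hL : 0 ≤ L)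
    (hsc : ∀ i x, StrongConvexOn Set.univ μ (g i x))
    (hdiff : ∀ i x, Differentiable ℝ (g i x))
    (hLip : ∀ i (y : EuclideanSpace ℝ (Fin dy)) (x₁ x₂ : EuclideanSpace ℝ (Fin dx)),
      ‖gradient (g i x₁) y - gradient (g i x₂) y‖ ≤ L * ‖x₁ - x₂‖)
    (x : Fin m → EuclideanSpace ℝ (Fin dx))
    (xbar : EuclideanSpace ℝ (Fin dx)) (hxbar : xbar = (m : ℝ)⁻¹ • ∑ i, x i)
    (ytilde ystar : EuclideanSpace ℝ (Fin dy))
    (hytilde : IsMinOn (fun y => (m : ℝ)⁻¹ * ∑ i, g i (x i) y) Set.univ ytilde)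
    (hystar : IsMinOn (fun y => (m : ℝ)⁻¹ * ∑ i, g i xbar y) Set.univ ystar) :
    ‖ytilde - ystar‖ ^ 2 ≤ (L ^ 2 / μ ^ 2) * ((m : ℝ)⁻¹ * ∑ i, ‖x i - xbar‖ ^ 2) := by
  have hmpos : (0:ℝ) < m := Nat.cast_pos.mpr hm
  set n := ‖ytilde - ystar‖ with hn_def
  have hn : 0 ≤ n := norm_nonneg _
  -- quadratic growth at the two minimizers
  have hF := strong_growth_aux (avg_strong_aux hm (fun i => g i (x i)) (fun i => hsc i (x i)))
    hytilde ystar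
  have hG := strong_growth_aux (avg_strong_aux hm (fun i => g i xbar) (fun i => hsc i xbar))
    hystar ytilde
  rw [norm_sub_rev ystar ytilde] at hF
  -- per-component Lipschitz bound on the difference function
  have hlip : ∀ i : Fin m,
      (g i xbar ytilde - g i (x i) ytilde) - (g i xbar ystar - g i (x i) ystar)
        ≤ L * ‖x i - xbar‖ * n := by
    intro i
    set h : EuclideanSpace ℝ (Fin dy) → ℝ := fun y => g i xbar y - g i (x i) y with hh
    have hdh : ∀ y, DifferentiableAt ℝ h y := fun y =>
      ((hdiff i xbar) y).sub ((hdiff i (x i)) y)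
    have hbound : ∀ y ∈ (Set.univ : Set (EuclideanSpace ℝ (Fin dy))),
        ‖fderiv ℝ h y‖ ≤ L * ‖x i - xbar‖ := by
      intro y _
      have heq : fderiv ℝ h y = fderiv ℝ (g i xbar) y - fderiv ℝ (g i (x i)) y :=
        fderiv_sub ((hdiff i xbar) y) ((hdiff i (x i)) y)
      rw [heq]
      have hnormeq : ‖fderiv ℝ (g i xbar) y - fderiv ℝ (g i (x i)) y‖
          = ‖gradient (g i xbar) y - gradient (g i (x i)) y‖ := by
        simp only [gradient]
        rw [← map_sub, LinearIsometryEquiv.norm_map]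
      rw [hnormeq]
      calc ‖gradient (g i xbar) y - gradient (g i (x i)) y‖
          ≤ L * ‖xbar - x i‖ := hLip i y xbar (x i)
        _ = L * ‖x i - xbar‖ := by rw [norm_sub_rev]
    have := convex_univ.norm_image_sub_le_of_norm_fderiv_le (fun y _ => hdh y) hbound
      (Set.mem_univ ystar) (Set.mem_univ ytilde)
    calc h ytilde - h ystar ≤ ‖h ytilde - h ystar‖ := le_abs_self _
      _ ≤ L * ‖x i - xbar‖ * ‖ytilde - ystar‖ := this
  -- sum the Lipschitz bounds
  have hsum : μ * n ^ 2 ≤ L * ((m:ℝ)⁻¹ * ∑ i, ‖x i - xbar‖) * n := by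
    have hkey : ((m:ℝ)⁻¹ * ∑ i, g i xbar ytilde) - ((m:ℝ)⁻¹ * ∑ i, g i (x i) ytilde)
        - (((m:ℝ)⁻¹ * ∑ i, g i xbar ystar) - ((m:ℝ)⁻¹ * ∑ i, g i (x i) ystar))
        ≤ (m:ℝ)⁻¹ * ∑ i, L * ‖x i - xbar‖ * n := by
      calc ((m:ℝ)⁻¹ * ∑ i, g i xbar ytilde) - ((m:ℝ)⁻¹ * ∑ i, g i (x i) ytilde)
          - (((m:ℝ)⁻¹ * ∑ i, g i xbar ystar) - ((m:ℝ)⁻¹ * ∑ i, g i (x i) ystar))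
          = (m:ℝ)⁻¹ * ∑ i, ((g i xbar ytilde - g i (x i) ytilde)
              - (g i xbar ystar - g i (x i) ystar)) := by
            simp only [Finset.sum_sub_distrib]
            ring
        _ ≤ (m:ℝ)⁻¹ * ∑ i, L * ‖x i - xbar‖ * n :=
            mul_le_mul_of_nonneg_left (Finset.sum_le_sum fun i _ => hlip i) (by positivity)
    have hconst : (m:ℝ)⁻¹ * ∑ i, L * ‖x i - xbar‖ * n
        = L * ((m:ℝ)⁻¹ * ∑ i, ‖x i - xbar‖) * n := by
      rw [← Finset.sum_mul, ← Finset.mul_sum]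
      ring
    rw [← hconst]
    have := add_le_add hF hG
    calc μ * n ^ 2 = μ / 2 * n ^ 2 + μ / 2 * n ^ 2 := by ring
      _ ≤ _ := by linarith [hkey, hF, hG]
  -- Cauchy–Schwarz on the average
  set S1 := (m:ℝ)⁻¹ * ∑ i, ‖x i - xbar‖ with hS1
  set S2 := (m:ℝ)⁻¹ * ∑ i, ‖x i - xbar‖ ^ 2 with hS2
  have hS1nn : 0 ≤ S1 := by positivity
  have hS2nn : 0 ≤ S2 := by positivity
  have hCS : S1 ^ 2 ≤ S2 := by
    have h := sq_sum_le_card_mul_sum_sq (s := (Finset.univ : Finset (Fin m)))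
      (f := fun i => ‖x i - xbar‖)
    rw [Finset.card_univ, Fintype.card_fin] at h
    rw [hS1, hS2, mul_pow]
    calc ((m:ℝ)⁻¹) ^ 2 * (∑ i, ‖x i - xbar‖) ^ 2
        ≤ ((m:ℝ)⁻¹) ^ 2 * ((m:ℝ) * ∑ i, ‖x i - xbar‖ ^ 2) :=
          mul_le_mul_of_nonneg_left h (by positivity)
      _ = (m:ℝ)⁻¹ * ∑ i, ‖x i - xbar‖ ^ 2 := by
          rw [sq, mul_assoc, ← mul_assoc ((m:ℝ)⁻¹) ((m:ℝ)) _, inv_mul_cancel₀ hmpos.ne',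
            one_mul]
  -- finish
  rcases eq_or_lt_of_le hn with h0 | hpos
  · have hrhs : 0 ≤ L ^ 2 / μ ^ 2 * S2 :=
      mul_nonneg (div_nonneg (sq_nonneg L) (sq_nonneg μ)) hS2nn
    rw [← h0]
    simpa using hrhs
  · have h1 : μ * n ≤ L * S1 := by
      have : μ * n * n ≤ L * S1 * n := by nlinarith [hsum]
      exact le_of_mul_le_mul_right this hpos
    have h2 : (μ * n) ^ 2 ≤ (L * S1) ^ 2 :=
      pow_le_pow_left₀ (by positivity) h1 2
    have h3 : L ^ 2 * S1 ^ 2 ≤ L ^ 2 * S2 :=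
      mul_le_mul_of_nonneg_left hCS (by positivity)
    rw [div_mul_eq_mul_div, le_div_iff₀ (by positivity : (0:ℝ) < μ ^ 2)]
    nlinarith [h2, h3]
end

section
/- Let f be C_f-Lipschitz in y and g be μ-strongly convex in y with minimizer y*(x) of g(x,·), and let y*_λ(x) minimize f(x,·) + λ g(x,·). Then ‖y*_λ(x) − y*(x)‖ ≤ C_f/(λμ) for every x and every λ > 0. -/
/-!
Stationarity of the penalized objective gives `λ ∇g(y*_λ) = -∇f(y*_λ)`, while `∇g(y*) = 0`;
so strong monotonicity of `∇g` yields
`λμ ‖y*_λ - y*‖ ≤ ‖λ ∇g(y*_λ) - λ ∇g(y*)‖ = ‖∇f(y*_λ)‖ ≤ C_f`.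
-/

section

variable {F : Type*} [NormedAddCommGroup F] [InnerProductSpace ℝ F] [CompleteSpace F]

theorem HasGradientAt.add_const_mul {f g : F → ℝ} {f' g' y : F} (hf : HasGradientAt f f' y)
    (hg : HasGradientAt g g' y) (c : ℝ) :
    HasGradientAt (fun z => f z + c * g z) (f' + c • g') y := by
  rw [hasGradientAt_iff_hasFDerivAt] at hf hg ⊢
  rw [map_add, map_smul]
  exact hf.add (hg.const_mul c)

theorem gradient_add_const_mul {f g : F → ℝ} {y : F} (hf : DifferentiableAt ℝ f y)
    (hg : DifferentiableAt ℝ g y) (c : ℝ) :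
    gradient (fun z => f z + c * g z) y = gradient f y + c • gradient g y :=
  (hf.hasGradientAt.add_const_mul hg.hasGradientAt c).gradient

end

theorem le_div_mul_of_add_smul_eq_zero {E : Type*} [NormedAddCommGroup E] [NormedSpace ℝ E]
    {a b : E} {r C μ lam : ℝ} (hμ : 0 < μ) (hlam : 0 < lam) (hab : a + lam • b = 0)
    (ha : ‖a‖ ≤ C) (hb : μ * r ≤ ‖b‖) : r ≤ C / (lam * μ) := by
  rw [le_div_iff₀ (by positivity)]
  calc r * (lam * μ) = lam * (μ * r) := by ring
    _ ≤ lam * ‖b‖ := by gcongr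
    _ = ‖a‖ := by
      rw [eq_neg_of_add_eq_zero_left hab, norm_neg, norm_smul, Real.norm_of_nonneg hlam.le]
    _ ≤ C := ha

theorem penalized_optimum_distance_bound_general
    {dx dy : ℕ}
    (f g : EuclideanSpace ℝ (Fin dx) → EuclideanSpace ℝ (Fin dy) → ℝ)
    (Cf μ : ℝ) (hμ : 0 < μ)
    (hfdiff : ∀ x, Differentiable ℝ (f x))
    (hgdiff : ∀ x, Differentiable ℝ (g x))
    (hfgrad : ∀ x y, ‖gradient (f x) y‖ ≤ Cf)
    (hmono : ∀ x y₁ y₂, μ * ‖y₁ - y₂‖ ≤ ‖gradient (g x) y₁ - gradient (g x) y₂‖)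
    (ystar : EuclideanSpace ℝ (Fin dx) → EuclideanSpace ℝ (Fin dy))
    (ystarl : ℝ → EuclideanSpace ℝ (Fin dx) → EuclideanSpace ℝ (Fin dy))
    (hystar : ∀ x, gradient (g x) (ystar x) = 0)
    (hystarl : ∀ (lam : ℝ) (x),
      gradient (fun y => f x y + lam * g x y) (ystarl lam x) = 0) :
    ∀ (x) (lam : ℝ), 0 < lam → ‖ystarl lam x - ystar x‖ ≤ Cf / (lam * μ) := by
  intro x lam hlam
  have hstationary : gradient (f x) (ystarl lam x) + lam • gradient (g x) (ystarl lam x) = 0 := by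
    rw [← gradient_add_const_mul (hfdiff x _) (hgdiff x _)]
    exact hystarl lam x
  refine le_div_mul_of_add_smul_eq_zero hμ hlam hstationary (hfgrad x _) ?_
  simpa only [hystar x, sub_zero] using hmono x (ystarl lam x) (ystar x)

/-- Let `f` be `C_f`-Lipschitz in `y` (gradient bounded by `C_f`) and `g`
be `μ`-strongly convex in `y` (so its gradient is `μ`-strongly monotone) with minimizer
`y*(x)` of `g(x,·)`, and let `y*_λ(x)` minimize `f(x,·) + λ g(x,·)`. Then
`‖y*_λ(x) − y*(x)‖ ≤ C_f/(λμ)` for every `x` and every `λ > 0`. -/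
theorem penalized_optimum_distance_bound
    {dx dy : ℕ}
    (f g : EuclideanSpace ℝ (Fin dx) → EuclideanSpace ℝ (Fin dy) → ℝ)
    (Cf μ : ℝ) (hCf : 0 ≤ Cf) (hμ : 0 < μ)
    (hfdiff : ∀ x, Differentiable ℝ (f x))
    (hgdiff : ∀ x, Differentiable ℝ (g x))
    (hfgrad : ∀ x y, ‖gradient (f x) y‖ ≤ Cf)
    (hmono : ∀ x y₁ y₂, μ * ‖y₁ - y₂‖ ≤ ‖gradient (g x) y₁ - gradient (g x) y₂‖)
    (ystar : EuclideanSpace ℝ (Fin dx) → EuclideanSpace ℝ (Fin dy))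
    (ystarl : ℝ → EuclideanSpace ℝ (Fin dx) → EuclideanSpace ℝ (Fin dy))
    (hystar : ∀ x, gradient (g x) (ystar x) = 0)
    (hystarl : ∀ (lam : ℝ) (x),
      gradient (fun y => f x y + lam * g x y) (ystarl lam x) = 0) :
    ∀ (x) (lam : ℝ), 0 < lam → ‖ystarl lam x - ystar x‖ ≤ Cf / (lam * μ) :=
  penalized_optimum_distance_bound_general f g Cf μ hμ hfdiff hgdiff hfgrad hmono ystar ystarl
    hystar hystarl
end

section
/- Define ψ_λ(x) = min_y [f(x,y) + λ(g(x,y) − g*(x))] with g*(x) = min_z g(x,z), where f(x,·) is C_f-Lipschitz and g(x,·) is μ-strongly convex with L-Lipschitz gradient. Then for all x, 0 ≤ ψ(x) − ψ_λ(x) ≤ L C_f² /(2 λ μ²), where ψ(x) = f(x, y*(x)); i.e., |ψ_λ(x) − ψ(x)| = O(ℓκ²/λ). -/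
/-- Quadratic growth of a strongly convex function at its minimizer. -/
lemma strong_convex_growth {n : ℕ} {G : EuclideanSpace ℝ (Fin n) → ℝ} {μ : ℝ}
    (hG : StrongConvexOn Set.univ μ G) {z : EuclideanSpace ℝ (Fin n)}
    (hz : IsMinOn G Set.univ z) (y : EuclideanSpace ℝ (Fin n)) :
    G z + μ / 2 * ‖y - z‖ ^ 2 ≤ G y := by
  have key : ∀ a : ℝ, 0 < a → a < 1 →
      (1 - a) * (μ / 2 * ‖y - z‖ ^ 2) ≤ G y - G z := by
    intro a ha ha1
    have h := hG.2 (Set.mem_univ y) (Set.mem_univ z) ha.le (by linarith : (0:ℝ) ≤ 1 - a)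
      (by ring)
    have hmin : G z ≤ G (a • y + (1 - a) • z) := hz (Set.mem_univ _)
    simp only [smul_eq_mul] at h
    nlinarith [h, hmin]
  have hlim : Filter.Tendsto (fun a : ℝ => (1 - a) * (μ / 2 * ‖y - z‖ ^ 2))
      (nhdsWithin 0 (Set.Ioi 0)) (nhds (μ / 2 * ‖y - z‖ ^ 2)) := by
    have : Filter.Tendsto (fun a : ℝ => (1 - a) * (μ / 2 * ‖y - z‖ ^ 2))
        (nhds 0) (nhds ((1 - 0) * (μ / 2 * ‖y - z‖ ^ 2))) := by
      exact (Filter.Tendsto.const_sub 1 Filter.tendsto_id).mul_const _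
    simpa using this.mono_left nhdsWithin_le_nhds
  have hev : ∀ᶠ a : ℝ in nhdsWithin 0 (Set.Ioi 0),
      (1 - a) * (μ / 2 * ‖y - z‖ ^ 2) ≤ G y - G z := by
    have h1 : ∀ᶠ a : ℝ in nhdsWithin 0 (Set.Ioi 0), a < 1 :=
      Filter.Eventually.filter_mono nhdsWithin_le_nhds (eventually_lt_nhds one_pos)
    filter_upwards [h1, self_mem_nhdsWithin] with a ha1 ha0
    exact key a ha0 ha1
  have := le_of_tendsto hlim hev
  linarith

/-- Define `ψ_λ(x) = min_y [f(x,y) + λ(g(x,y) − g*(x))]` with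
`g*(x) = min_z g(x,z)`, where `f(x,·)` is `C_f`-Lipschitz and `g(x,·)` is `μ`-strongly
convex with `L`-Lipschitz gradient. Then `0 ≤ ψ(x) − ψ_λ(x) ≤ L C_f²/(2λμ²)` for all
`x`, where `ψ(x) = f(x, y*(x))`. The minima are witnessed by the argmin maps `ystar`
(for `g(x,·)`) and `ylam` (for the penalized objective). -/
theorem penalty_value_function_gap
    {dx dy : ℕ}
    (f g : EuclideanSpace ℝ (Fin dx) → EuclideanSpace ℝ (Fin dy) → ℝ)
    (Cf μ L lam : ℝ) (hCf : 0 ≤ Cf) (hμ : 0 < μ) (hμL : μ ≤ L) (hlam : 0 < lam)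
    (hfLip : ∀ x y₁ y₂, |f x y₁ - f x y₂| ≤ Cf * ‖y₁ - y₂‖)
    (hgsc : ∀ x, StrongConvexOn Set.univ μ (g x))
    (hfdiff : ∀ x, Differentiable ℝ (f x))
    (hgdiff : ∀ x, Differentiable ℝ (g x))
    (hgLip : ∀ x y₁ y₂, ‖gradient (g x) y₁ - gradient (g x) y₂‖ ≤ L * ‖y₁ - y₂‖)
    (ystar ylam : EuclideanSpace ℝ (Fin dx) → EuclideanSpace ℝ (Fin dy))
    (hystar : ∀ x, IsMinOn (g x) Set.univ (ystar x))
    (hylam : ∀ x, IsMinOn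
      (fun y => f x y + lam * (g x y - g x (ystar x))) Set.univ (ylam x)) :
    ∀ x,
      0 ≤ f x (ystar x) -
          (f x (ylam x) + lam * (g x (ylam x) - g x (ystar x))) ∧
      f x (ystar x) -
          (f x (ylam x) + lam * (g x (ylam x) - g x (ystar x))) ≤
        L * Cf ^ 2 / (2 * lam * μ ^ 2) := by
  intro x
  set ys := ystar x
  set yl := ylam x
  have hmin : f x yl + lam * (g x yl - g x ys) ≤ f x ys + lam * (g x ys - g x ys) :=
    hylam x (Set.mem_univ ys)
  constructor
  · simp only [sub_self, mul_zero, add_zero] at hmin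
    linarith
  · set t : ℝ := ‖yl - ys‖ with ht
    have ht0 : 0 ≤ t := norm_nonneg _
    have hg2 : μ / 2 * t ^ 2 ≤ g x yl - g x ys := by
      have := strong_convex_growth (hgsc x) (hystar x) yl
      linarith
    have hf2 : f x ys - f x yl ≤ Cf * t := by
      have := hfLip x ys yl
      rw [abs_sub_le_iff] at this
      calc f x ys - f x yl ≤ Cf * ‖ys - yl‖ := this.1
        _ = Cf * t := by rw [norm_sub_rev]
    rw [le_div_iff₀ (by positivity)]
    nlinarith [mul_nonneg hμ.le (sq_nonneg (Cf - lam * μ * t)),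
      mul_le_mul_of_nonneg_right hμL (sq_nonneg Cf),
      mul_le_mul_of_nonneg_left hf2 (by positivity : (0:ℝ) ≤ 2 * lam * μ ^ 2),
      mul_le_mul_of_nonneg_left hg2 (by positivity : (0:ℝ) ≤ 2 * lam ^ 2 * μ ^ 2)]
end

section
/- Let nonnegative sequences (A_t), (B_t) satisfy A_{t+1} ≤ (1 − a)A_t + c₁B_t and B_{t+1} ≤ (1 − b)B_t + c₂A_t + e, with a, b ∈ (0,1), c₁, c₂, e ≥ 0 and c₁c₂ ≤ ab/4. Then the Lyapunov function V_t = A_t + (2c₁/b)B_t satisfies V_{t+1} ≤ (1 − min{a,b}/2)V_t + (2c₁/b)e for all t, and hence V_t ≤ V_0 (1 − min{a,b}/2)^t + (4c₁ e)/(b·min{a,b}). -/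
/-! With `κ = 2c₁/b`, the weight `κ` on `B` converts half of `B`'s own contraction `b` into
absorbing the feed `c₁ B` into `A`, while `c₁c₂ ≤ ab/4` makes the feed `κ c₂ A` into the weighted
`B` at most half of `A`'s contraction `a`. So `V = A + κB` contracts at rate `1 - min a b / 2`
up to the additive term `κe`, and unrolling gives the geometric bound with the fixed point
`K = 2κe / min a b` of `V ↦ (1 - min a b / 2) V + κe`. -/

theorem le_mul_pow_add_of_forall_succ_le {V : ℕ → ℝ} {q d K : ℝ} (hq : 0 ≤ q) (hK : 0 ≤ K)
    (hfix : q * K + d ≤ K) (hV : ∀ t, V (t + 1) ≤ q * V t + d) (t : ℕ) :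
    V t ≤ V 0 * q ^ t + K := by
  induction t with
  | zero => simpa using hK
  | succ n ih =>
    calc V (n + 1) ≤ q * V n + d := hV n
      _ ≤ q * (V 0 * q ^ n + K) + d := by gcongr
      _ ≤ V 0 * q ^ (n + 1) + K := by rw [pow_succ]; linarith

theorem add_mul_le_of_coupled_le {A B A' B' a b c₁ c₂ e κ q : ℝ} (hA : 0 ≤ A) (hB : 0 ≤ B)
    (hκ : 0 ≤ κ) (hqA : 1 - a + κ * c₂ ≤ q) (hqB : c₁ + κ * (1 - b) ≤ q * κ)
    (hA' : A' ≤ (1 - a) * A + c₁ * B) (hB' : B' ≤ (1 - b) * B + c₂ * A + e) :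
    A' + κ * B' ≤ q * (A + κ * B) + κ * e := by
  have := mul_le_mul_of_nonneg_left hB' hκ
  have := mul_le_mul_of_nonneg_right hqA hA
  have := mul_le_mul_of_nonneg_right hqB hB
  linarith

theorem coupled_recursion_lyapunov_general
    (A B : ℕ → ℝ) (a b c₁ c₂ e : ℝ)
    (hA : ∀ t, 0 ≤ A t) (hB : ∀ t, 0 ≤ B t)
    (ha0 : 0 < a) (hb0 : 0 < b) (hb1 : b < 1)
    (hc₁ : 0 ≤ c₁) (he : 0 ≤ e)
    (hcc : c₁ * c₂ ≤ a * b / 4)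
    (hrecA : ∀ t, A (t + 1) ≤ (1 - a) * A t + c₁ * B t)
    (hrecB : ∀ t, B (t + 1) ≤ (1 - b) * B t + c₂ * A t + e) :
    (∀ t, A (t + 1) + (2 * c₁ / b) * B (t + 1) ≤
        (1 - min a b / 2) * (A t + (2 * c₁ / b) * B t) + (2 * c₁ / b) * e) ∧
    (∀ t, A t + (2 * c₁ / b) * B t ≤
        (A 0 + (2 * c₁ / b) * B 0) * (1 - min a b / 2) ^ t
          + 4 * c₁ * e / (b * min a b)) := by
  have hm0 : 0 < min a b := lt_min ha0 hb0
  have hma : min a b ≤ a := min_le_left a b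
  have hmb : min a b ≤ b := min_le_right a b
  have hκc₂ : 2 * c₁ / b * c₂ ≤ a / 2 := by
    rw [div_mul_eq_mul_div, div_le_iff₀ hb0]; linarith
  have hκb : 2 * c₁ / b * b = 2 * c₁ := div_mul_cancel₀ _ hb0.ne'
  have hstep : ∀ t, A (t + 1) + (2 * c₁ / b) * B (t + 1) ≤
      (1 - min a b / 2) * (A t + (2 * c₁ / b) * B t) + (2 * c₁ / b) * e := fun t =>
    add_mul_le_of_coupled_le (hA t) (hB t) (by positivity) (by linarith)
      (by linarith [mul_le_mul_of_nonneg_left hmb (by positivity : 0 ≤ 2 * c₁ / b)])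
      (hrecA t) (hrecB t)
  have hfix : (1 - min a b / 2) * (4 * c₁ * e / (b * min a b)) + 2 * c₁ / b * e =
      4 * c₁ * e / (b * min a b) := by
    field_simp
    ring
  exact ⟨hstep, le_mul_pow_add_of_forall_succ_le (by linarith) (by positivity) hfix.le hstep⟩

/-- Let nonnegative sequences `(A_t)`, `(B_t)` satisfy
`A_{t+1} ≤ (1 − a)A_t + c₁B_t` and `B_{t+1} ≤ (1 − b)B_t + c₂A_t + e`, with
`a, b ∈ (0,1)`, `c₁, c₂, e ≥ 0` and `c₁c₂ ≤ ab/4`. Then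
`V_t = A_t + (2c₁/b)B_t` satisfies `V_{t+1} ≤ (1 − min{a,b}/2)V_t + (2c₁/b)e`, and
hence `V_t ≤ V_0 (1 − min{a,b}/2)^t + (4c₁e)/(b·min{a,b})`. -/
theorem coupled_recursion_lyapunov
    (A B : ℕ → ℝ) (a b c₁ c₂ e : ℝ)
    (hA : ∀ t, 0 ≤ A t) (hB : ∀ t, 0 ≤ B t)
    (ha0 : 0 < a) (ha1 : a < 1) (hb0 : 0 < b) (hb1 : b < 1)
    (hc₁ : 0 ≤ c₁) (hc₂ : 0 ≤ c₂) (he : 0 ≤ e)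
    (hcc : c₁ * c₂ ≤ a * b / 4)
    (hrecA : ∀ t, A (t + 1) ≤ (1 - a) * A t + c₁ * B t)
    (hrecB : ∀ t, B (t + 1) ≤ (1 - b) * B t + c₂ * A t + e) :
    (∀ t, A (t + 1) + (2 * c₁ / b) * B (t + 1) ≤
        (1 - min a b / 2) * (A t + (2 * c₁ / b) * B t) + (2 * c₁ / b) * e) ∧
    (∀ t, A t + (2 * c₁ / b) * B t ≤
        (A 0 + (2 * c₁ / b) * B 0) * (1 - min a b / 2) ^ t
          + 4 * c₁ * e / (b * min a b)) :=
  coupled_recursion_lyapunov_general A B a b c₁ c₂ e hA hB ha0 hb0 hb1 hc₁ he hcc hrecA hrecB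
end
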